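/- Under the same setup, ∫ G(e^{jθ}) (Ψ(e^{jθ})/(G(e^{jθ})* Λ G(e^{jθ}))) G(e^{jθ})* dθ/(2π) is a positive definite matrix. -/

import Mathlib

/-!
For `x ≠ 0`, `x* (moment) x = (1/2π) ∫ Ψ |x* G|² / (G* Λ G) dθ`, which is positive unless
`x* G` vanishes on the circle. Writing `x* G(z) = x* adj(z - A) B / det(z - A)`, that would make
the polynomial `x* adj(X - A) B` vanish at infinitely many points, hence identically. This
numerator has degree `< n`, and replacing `B` by `A B` multiplies it by `X` and subtracts
`χ_A · x* B` with `χ_A` monic of degree `n`; so inductively `x* Aᵏ B = 0` for all `k`, and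
reachability gives `x = 0`.
-/

open Matrix MeasureTheory Real Filter
open scoped ComplexOrder

noncomputable section

abbrev Mat (n : ℕ) := Matrix (Fin n) (Fin n) ℂ
abbrev Vec (n : ℕ) := Matrix (Fin n) (Fin 1) ℂ

/-- the point e^{jθ} on the unit circle -/
def circPt (θ : ℝ) : ℂ := Complex.exp (θ * Complex.I)

/-- G(e^{jθ}) = (e^{jθ} I - A)⁻¹ B -/
def Gm {n : ℕ} (A : Mat n) (B : Vec n) (θ : ℝ) : Vec n :=
  (circPt θ • (1 : Mat n) - A)⁻¹ * B

/-- the scalar G* Λ G at e^{jθ} -/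
def quad {n : ℕ} (A : Mat n) (B : Vec n) (Λ : Mat n) (θ : ℝ) : ℂ :=
  ((Gm A B θ)ᴴ * Λ * Gm A B θ) 0 0

/-- normalized entrywise matrix integral over the unit circle -/
def mInt {n : ℕ} (f : ℝ → Mat n) : Mat n :=
  Matrix.of fun i j => (1 / (2 * π) : ℝ) • ∫ θ in (0:ℝ)..(2 * π), f θ i j

/-- normalized scalar (complex) integral over the unit circle -/
def sInt (f : ℝ → ℂ) : ℂ := (1 / (2 * π) : ℝ) • ∫ θ in (0:ℝ)..(2 * π), f θ

/-- normalized scalar (real) integral over the unit circle -/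
def sIntR (f : ℝ → ℝ) : ℝ := (1 / (2 * π)) * ∫ θ in (0:ℝ)..(2 * π), f θ

/-- all eigenvalues of A lie in the open unit disc -/
def IsStable {n : ℕ} (A : Mat n) : Prop := ∀ μ ∈ spectrum ℂ A, ‖μ‖ < 1

/-- (A,B) is a reachable pair: the controllability matrix has full rank -/
def Reachable {n : ℕ} (A : Mat n) (B : Vec n) : Prop :=
  (Matrix.of fun (i : Fin n) (k : Fin n) => (A ^ (k : ℕ) * B) i 0).rank = n

open scoped Classical in
/-- positive semidefinite square root (junk value 0 off the psd cone) -/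
def msqrt {n : ℕ} (M : Mat n) : Mat n :=
  if h : M.PosSemidef then
    h.1.eigenvectorUnitary.1 * diagonal ((↑) ∘ Real.sqrt ∘ h.1.eigenvalues) *
      (star h.1.eigenvectorUnitary : Mat n) else 0

/-- the moment map ∫ G (Ψ/(G*ΛG)) G* -/
def moment {n : ℕ} (A : Mat n) (B : Vec n) (Ψ : ℝ → ℝ) (Λ : Mat n) : Mat n :=
  mInt (fun θ => ((Ψ θ : ℂ) / quad A B Λ θ) • (Gm A B θ * (Gm A B θ)ᴴ))

/-- the iteration map Θ(Λ) = ∫ Λ^{1/2} G (Ψ/(G*ΛG)) G* Λ^{1/2} -/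
def Theta {n : ℕ} (A : Mat n) (B : Vec n) (Ψ : ℝ → ℝ) (Λ : Mat n) : Mat n :=
  mInt (fun θ => ((Ψ θ : ℂ) / quad A B Λ θ) •
    (msqrt Λ * (Gm A B θ * (Gm A B θ)ᴴ) * msqrt Λ))

/-- the linearization M of Θ at Λ:
M(X) = X - Λ^{1/2} ∫ (GΨG*/(G*ΛG)) (G*XG/(G*ΛG)) Λ^{1/2} -/
def Mlin {n : ℕ} (A : Mat n) (B : Vec n) (Ψ : ℝ → ℝ) (Λ : Mat n) (X : Mat n) : Mat n :=
  X - msqrt Λ * mInt (fun θ =>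
    (((Ψ θ : ℂ) * (((Gm A B θ)ᴴ * X * Gm A B θ) 0 0)) / (quad A B Λ θ) ^ 2) •
      (Gm A B θ * (Gm A B θ)ᴴ)) * msqrt Λ

/-- the range of the operator Γ : Φ ↦ ∫ G Φ G* on continuous (2π-periodic) functions -/
def RangeGamma {n : ℕ} (A : Mat n) (B : Vec n) : Set (Mat n) :=
  {M | ∃ Φ : ℝ → ℝ, Continuous Φ ∧ (∀ θ, Φ (θ + 2 * π) = Φ θ) ∧
    M = mInt (fun θ => (Φ θ : ℂ) • (Gm A B θ * (Gm A B θ)ᴴ))}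

open Polynomial Set

section ResolventNumerator

variable {R : Type*} [CommRing R] {n : ℕ}

theorem Matrix.adjugate_charmatrix_mem_degreeLT (A : Matrix (Fin n) (Fin n) R) (i j : Fin n) :
    adjugate (charmatrix A) i j ∈ degreeLT R n := by
  obtain _ | m := n
  · exact i.elim0
  have hsub : (charmatrix A).submatrix j.succAbove i.succAbove =
      (X : R[X]) • ((1 : Matrix (Fin (m + 1)) (Fin (m + 1)) R).submatrix j.succAbove
        i.succAbove).map C + ((-A).submatrix j.succAbove i.succAbove).map C := by
    ext k l
    by_cases hkl : j.succAbove k = i.succAbove l <;>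
      simp [one_apply, hkl, sub_eq_add_neg]
  have hdet := natDegree_det_X_add_C_le
    ((1 : Matrix (Fin (m + 1)) (Fin (m + 1)) R).submatrix j.succAbove i.succAbove)
    ((-A).submatrix j.succAbove i.succAbove)
  rw [Fintype.card_fin, ← hsub] at hdet
  rw [adjugate_fin_succ_eq_det_submatrix, mem_degreeLT]
  refine (degree_le_of_natDegree_le ?_).trans_lt (by exact_mod_cast m.lt_succ_self)
  rw [show ((-1 : R[X]) ^ (j + i : ℕ)) = C ((-1) ^ (j + i : ℕ)) by simp]
  exact (natDegree_C_mul_le _ _).trans hdet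

theorem Matrix.charmatrix_map_eval (A : Matrix (Fin n) (Fin n) R) (z : R) :
    (charmatrix A).map (eval z) = z • (1 : Matrix (Fin n) (Fin n) R) - A := by
  ext i j
  obtain rfl | hij := eq_or_ne i j <;> simp [*]

-- `u ⬝ᵥ adj(X • 1 - A) v`, the numerator of the rational function `z ↦ u ⬝ᵥ (z • 1 - A)⁻¹ v`
def resolventNumerator (A : Matrix (Fin n) (Fin n) R) (u v : Fin n → R) : R[X] :=
  (C ∘ u) ⬝ᵥ adjugate (charmatrix A) *ᵥ (C ∘ v)

theorem resolventNumerator_mem_degreeLT (A : Matrix (Fin n) (Fin n) R) (u v : Fin n → R) :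
    resolventNumerator A u v ∈ degreeLT R n := by
  simp only [resolventNumerator, dotProduct, mulVec, Function.comp_apply]
  refine Submodule.sum_mem _ fun i _ => ?_
  rw [C_mul']
  refine Submodule.smul_mem _ _ (Submodule.sum_mem _ fun j _ => ?_)
  rw [mul_comm, C_mul']
  exact Submodule.smul_mem _ _ (adjugate_charmatrix_mem_degreeLT A i j)

theorem eval_resolventNumerator (A : Matrix (Fin n) (Fin n) R) (u v : Fin n → R) (z : R) :
    (resolventNumerator A u v).eval z =
      u ⬝ᵥ adjugate (z • (1 : Matrix (Fin n) (Fin n) R) - A) *ᵥ v := by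
  have hadj := (evalRingHom z).map_adjugate (charmatrix A)
  rw [RingHom.mapMatrix_apply, RingHom.mapMatrix_apply, coe_evalRingHom,
    charmatrix_map_eval] at hadj
  rw [resolventNumerator, ← coe_evalRingHom, RingHom.map_dotProduct, ← hadj]
  congr 1
  · ext i; simp
  · ext i; rw [Function.comp_apply, RingHom.map_mulVec]; congr 1; ext j; simp

theorem resolventNumerator_mulVec (A : Matrix (Fin n) (Fin n) R) (u v : Fin n → R) :
    resolventNumerator A u (A *ᵥ v) =
      X * resolventNumerator A u v - A.charpoly * C (u ⬝ᵥ v) := by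
  have hCv : C ∘ (A *ᵥ v) = A.map C *ᵥ (C ∘ v) := funext (C.map_mulVec A v)
  have hAC : A.map C = scalar (Fin n) (X : R[X]) - charmatrix A := by
    rw [charmatrix, sub_sub_cancel, RingHom.mapMatrix_apply]
  have hadj : adjugate (charmatrix A) * charmatrix A = A.charpoly • 1 := adjugate_mul _
  have hX : scalar (Fin n) (X : R[X]) = (X : R[X]) • 1 := by
    rw [scalar_apply, smul_one_eq_diagonal]
  rw [resolventNumerator, resolventNumerator, hCv, mulVec_mulVec, hAC, hX, mul_sub, hadj,
    mul_smul_comm, mul_one, sub_mulVec, smul_mulVec, smul_mulVec, one_mulVec, dotProduct_sub,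
    dotProduct_smul, dotProduct_smul, (C : R →+* R[X]).map_dotProduct, smul_eq_mul, smul_eq_mul]

theorem Polynomial.Monic.eq_zero_of_mul_C_mem_degreeLT {p : R[X]} (hp : p.Monic) {c : R}
    (h : p * C c ∈ degreeLT R p.natDegree) : c = 0 := by
  have hcoeff := coeff_eq_zero_of_degree_lt (mem_degreeLT.mp h)
  rwa [coeff_mul_C, hp.coeff_natDegree, one_mul] at hcoeff

theorem dotProduct_pow_mulVec_eq_zero [Nontrivial R] {A : Matrix (Fin n) (Fin n) R}
    {u v : Fin n → R} (h : resolventNumerator A u v = 0) (k : ℕ) : u ⬝ᵥ (A ^ k *ᵥ v) = 0 := by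
  have step : ∀ w, resolventNumerator A u w = 0 →
      u ⬝ᵥ w = 0 ∧ resolventNumerator A u (A *ᵥ w) = 0 := by
    intro w hw
    have hmem := resolventNumerator_mem_degreeLT A u (A *ᵥ w)
    rw [resolventNumerator_mulVec, hw, mul_zero, zero_sub, neg_mem_iff] at hmem
    have hc : u ⬝ᵥ w = 0 :=
      A.charpoly_monic.eq_zero_of_mul_C_mem_degreeLT (by simpa using hmem)
    exact ⟨hc, by rw [resolventNumerator_mulVec, hw, hc]; simp⟩
  have hpow : ∀ k, resolventNumerator A u (A ^ k *ᵥ v) = 0 := by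
    intro k
    induction k with
    | zero => simpa using h
    | succ k ih => rw [pow_succ', ← mulVec_mulVec, (step _ ih).2]
  exact (step _ (hpow k)).1

theorem resolventNumerator_eq_zero_of_infinite [IsDomain R] {A : Matrix (Fin n) (Fin n) R}
    {u v : Fin n → R}
    (h : {z : R | u ⬝ᵥ adjugate (z • (1 : Matrix (Fin n) (Fin n) R) - A) *ᵥ v = 0}.Infinite) :
    resolventNumerator A u v = 0 :=
  eq_zero_of_infinite_isRoot _ (by simpa [IsRoot, eval_resolventNumerator] using h)

end ResolventNumerator

theorem Matrix.isUnit_of_rank_eq_card {K m : Type*} [Field K] [Fintype m] [DecidableEq m]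
    {M : Matrix m m K} (h : M.rank = Fintype.card m) : IsUnit M := by
  rw [← mulVec_surjective_iff_isUnit, ← coe_mulVecLin, ← LinearMap.range_eq_top]
  exact Submodule.eq_top_of_finrank_eq (h.trans (Module.finrank_fintype_fun_eq_card K).symm)

theorem Reachable.eq_zero {n : ℕ} {A : Mat n} {B : Vec n} (hR : Reachable A B) {u : Fin n → ℂ}
    (h : ∀ k < n, u ⬝ᵥ (A ^ k *ᵥ fun i => B i 0) = 0) : u = 0 := by
  have hunit := isUnit_of_rank_eq_card (hR.trans (Fintype.card_fin n).symm)
  apply vecMul_injective_of_isUnit hunit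
  ext k
  exact (h k k.isLt).trans (congrFun (zero_vecMul _) k).symm

theorem circPt_eq_circle_exp (θ : ℝ) : circPt θ = Circle.exp θ := (Circle.coe_exp θ).symm

theorem injOn_circPt : InjOn circPt (Ico 0 (2 * π)) := fun _ ha _ hb hab =>
  Circle.exp_injOn_Ico (by simp) ha hb (Subtype.ext (by simpa [circPt_eq_circle_exp] using hab))

theorem IsStable.isUnit_circPt_smul_one_sub {n : ℕ} {A : Mat n} (hA : IsStable A) (θ : ℝ) :
    IsUnit (circPt θ • (1 : Mat n) - A) := by
  by_contra h
  have hlt := hA _ (spectrum.mem_iff.mpr (by rwa [Algebra.algebraMap_eq_smul_one]))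
  simp [circPt] at hlt

theorem IsStable.continuous_Gm {n : ℕ} {A : Mat n} (hA : IsStable A) (B : Vec n) :
    Continuous (Gm A B) := by
  have hM : Continuous fun θ => circPt θ • (1 : Mat n) - A := by unfold circPt; fun_prop
  refine (continuous_iff_continuousAt.mpr fun θ => ?_).matrix_mul continuous_const
  have hdet := (isUnit_iff_isUnit_det _).mp (hA.isUnit_circPt_smul_one_sub θ)
  refine (continuousAt_matrix_inv _ ?_).comp hM.continuousAt
  exact hdet.unit_spec ▸ NormedRing.inverse_continuousAt hdet.unit

theorem eq_zero_of_forall_vecMul_Gm_eq_zero {n : ℕ} {A : Mat n} {B : Vec n} (hA : IsStable A)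
    (hR : Reachable A B) {u : Fin n → ℂ} (h : ∀ θ ∈ Ico 0 (2 * π), (u ᵥ* Gm A B θ) 0 = 0) :
    u = 0 := by
  have hroots : circPt '' Ico 0 (2 * π) ⊆
      {z | u ⬝ᵥ adjugate (z • (1 : Mat n) - A) *ᵥ (fun i => B i 0) = 0} := by
    rintro _ ⟨θ, hθ, rfl⟩
    set M := circPt θ • (1 : Mat n) - A
    have hdet : M.det ≠ 0 :=
      ((isUnit_iff_isUnit_det _).mp (hA.isUnit_circPt_smul_one_sub θ)).ne_zero
    have hadj : adjugate M = M.det • M⁻¹ := by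
      rw [inv_def, smul_smul, Ring.inverse_eq_inv', mul_inv_cancel₀ hdet, one_smul]
    have hGm := h θ hθ
    rw [Gm, ← vecMul_vecMul] at hGm
    rw [mem_ofPred_eq, hadj, smul_mulVec, dotProduct_smul, dotProduct_mulVec]
    exact smul_eq_zero_of_right _ hGm
  have hnum := resolventNumerator_eq_zero_of_infinite
    (((Ico_infinite (by positivity)).image injOn_circPt).mono hroots)
  exact hR.eq_zero fun k _ => dotProduct_pow_mulVec_eq_zero hnum k

theorem isHermitian_mInt {n : ℕ} {f : ℝ → Mat n} (hf : ∀ θ, (f θ).IsHermitian) :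
    (mInt f).IsHermitian := by
  ext i j
  simp only [conjTranspose_apply, mInt, of_apply, star_smul, star_trivial, RCLike.star_def,
    ← intervalIntegral.intervalIntegral_conj]
  congr 1
  exact intervalIntegral.integral_congr fun θ _ => (hf θ).apply i j

theorem dotProduct_mInt_mulVec {n : ℕ} {f : ℝ → Mat n}
    (hf : ∀ i j, IntervalIntegrable (fun θ => f θ i j) volume 0 (2 * π)) (u v : Fin n → ℂ) :
    u ⬝ᵥ mInt f *ᵥ v = sInt fun θ => u ⬝ᵥ f θ *ᵥ v := by
  have hint : ∀ i j, IntervalIntegrable (fun θ => u i * (f θ i j * v j)) volume 0 (2 * π) :=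
    fun i j => ((hf i j).mul_const _).const_mul _
  simp only [sInt, dotProduct, mulVec, mInt, of_apply, Finset.mul_sum]
  rw [intervalIntegral.integral_finsetSum fun i _ => by
      simpa only [Finset.sum_fn] using IntervalIntegrable.sum _ fun j _ => hint i j,
    Finset.smul_sum]
  refine Finset.sum_congr rfl fun i _ => ?_
  rw [intervalIntegral.integral_finsetSum fun j _ => hint i j, Finset.smul_sum]
  refine Finset.sum_congr rfl fun j _ => ?_
  rw [intervalIntegral.integral_const_mul, intervalIntegral.integral_mul_const, smul_mul_assoc,
    mul_smul_comm]

theorem sInt_ofReal (F : ℝ → ℝ) : sInt (fun θ => (F θ : ℂ)) = sIntR F := by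
  rw [sInt, sIntR, intervalIntegral.integral_ofReal, Complex.real_smul, Complex.ofReal_mul]

theorem sIntR_pos {F : ℝ → ℝ} (hF : ContinuousOn F (Icc 0 (2 * π)))
    (h0 : ∀ θ ∈ Ioc 0 (2 * π), 0 ≤ F θ) (hpos : ∃ θ ∈ Icc 0 (2 * π), 0 < F θ) : 0 < sIntR F :=
  mul_pos (by positivity) (intervalIntegral.integral_pos (by positivity) hF h0 hpos)

theorem star_dotProduct_mul_conjTranspose_mulVec {m : Type*} [Fintype m]
    (G : Matrix m (Fin 1) ℂ) (x : m → ℂ) :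
    star x ⬝ᵥ (G * Gᴴ) *ᵥ x = (Complex.normSq ((star x ᵥ* G) 0) : ℂ) := by
  rw [← mulVec_mulVec, dotProduct_mulVec, ← star_star x, ← star_vecMul, star_star]
  simp [dotProduct, Complex.mul_conj]

theorem quad_ofReal_re {n : ℕ} (A : Mat n) (B : Vec n) {Λ : Mat n} (hΛ : Λ.IsHermitian)
    (θ : ℝ) : ((quad A B Λ θ).re : ℂ) = quad A B Λ θ :=
  (isHermitian_conjTranspose_mul_mul (Gm A B θ) hΛ).coe_re_apply_self 0

theorem posDef_mInt_ofReal_smul_mul_conjTranspose {n : ℕ} {w : ℝ → ℝ}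
    {G : ℝ → Matrix (Fin n) (Fin 1) ℂ} (hw : Continuous w) (hw_pos : ∀ θ, 0 < w θ)
    (hG : Continuous G)
    (hG_span : ∀ u : Fin n → ℂ, (∀ θ ∈ Ico 0 (2 * π), (u ᵥ* G θ) 0 = 0) → u = 0) :
    (mInt fun θ => (w θ : ℂ) • (G θ * (G θ)ᴴ)).PosDef := by
  refine .of_dotProduct_mulVec_pos (isHermitian_mInt fun θ =>
    (isHermitian_mul_conjTranspose_self _).smul (Complex.conj_ofReal _)) fun x hx => ?_
  have hcont : ∀ i j, Continuous fun θ => ((w θ : ℂ) • (G θ * (G θ)ᴴ)) i j := by fun_prop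
  rw [dotProduct_mInt_mulVec fun i j => (hcont i j).intervalIntegrable _ _]
  simp only [smul_mulVec, dotProduct_smul, star_dotProduct_mul_conjTranspose_mulVec, smul_eq_mul,
    ← Complex.ofReal_mul, sInt_ofReal]
  obtain ⟨θ₀, hθ₀, hne⟩ : ∃ θ ∈ Ico 0 (2 * π), (star x ᵥ* G θ) 0 ≠ 0 := by
    by_contra! h
    exact hx (star_eq_zero.mp (hG_span _ h))
  refine Complex.zero_lt_real.mpr (sIntR_pos (by fun_prop)
    (fun θ _ => mul_nonneg (hw_pos θ).le (Complex.normSq_nonneg _))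
    ⟨θ₀, Ico_subset_Icc_self hθ₀, mul_pos (hw_pos θ₀) (Complex.normSq_pos.mpr hne)⟩)

/-- ∫ G (Ψ/(G*ΛG)) G* is positive definite. -/
theorem stmt3 {n : ℕ} (A : Mat n) (B : Vec n) (Ψ : ℝ → ℝ) (Λ : Mat n)
    (hA : IsStable A) (hR : Reachable A B)
    (hΨc : Continuous Ψ) (hΨpos : ∀ θ, 0 < Ψ θ)
    (hΛ : Λ.IsHermitian)
    (hq : ∀ θ, 0 < (quad A B Λ θ).re) :
    (moment A B Ψ Λ).PosDef := by
  have hGm := hA.continuous_Gm B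
  have hmoment : moment A B Ψ Λ =
      mInt fun θ => ((Ψ θ / (quad A B Λ θ).re : ℝ) : ℂ) • (Gm A B θ * (Gm A B θ)ᴴ) := by
    simp only [moment, Complex.ofReal_div, quad_ofReal_re A B hΛ]
  rw [hmoment]
  refine posDef_mInt_ofReal_smul_mul_conjTranspose ?_ (fun θ => div_pos (hΨpos θ) (hq θ)) hGm
    fun u => eq_zero_of_forall_vecMul_Gm_eq_zero hA hR
  have hquad : Continuous fun θ => quad A B Λ θ := by unfold quad; fun_prop
  exact hΨc.div (Complex.continuous_re.comp hquad) fun θ => (hq θ).ne'
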